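/- Let V be an n-graded vector space over a field 𝕂 of characteristic 0. For all homogeneous K₁ ∈ M^{(k₁,κ₁)}(V) and K₂ ∈ M^{(k₂,κ₂)}(V) one has j([K₁,K₂]^Δ) = j(K₁)∘j(K₂) − (−1)^{k₁k₂+⟨κ₁,κ₂⟩} j(K₂)∘j(K₁) as endomorphisms of M(V), i.e. j([K₁,K₂]^Δ) equals the (n+1)-graded commutator [j(K₁), j(K₂)] in End(M(V)). -/

import Mathlib

namespace NR

open Finset

/-- The sign `(-1)^z` for an integer `z`. -/
def sgn (z : ℤ) : ℤ := (-1) ^ z.natAbs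

/-- The inner product `⟨x,y⟩ = ∑ i, xⁱ yⁱ` of multidegrees `x, y ∈ ℤⁿ`. -/
def pairZ (n : ℕ) (x y : Fin n → ℤ) : ℤ := ∑ i, x i * y i

/-- The inner product of `(n+1)`-degrees in `ℤ × ℤⁿ`. -/
def prE (n : ℕ) (g h : ℤ × (Fin n → ℤ)) : ℤ := g.1 * h.1 + pairZ n g.2 h.2

/-- Shift a sequence: `shiftSeq f i = (f i, f (i+1), …)`. -/
def shiftSeq {β : Type*} (f : ℕ → β) (i : ℕ) : ℕ → β := fun m => f (m + i)

/-- Insert the value `c` at slot `i` of the sequence `f`, where `c` replaces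
`a` consecutive entries of `f` (the entries `f i, …, f (i+a-1)`). -/
def insSeq {β : Type*} (a i : ℕ) (c : β) (f : ℕ → β) : ℕ → β :=
  fun l => if l < i then f l else if l = i then c else f (l + a - 1)

/-- Permute the first `a` entries of a sequence by `σ`. -/
def permSeq {β : Type*} (a : ℕ) (σ : Equiv.Perm (Fin a)) (f : ℕ → β) : ℕ → β :=
  fun l => if h : l < a then f ((σ ⟨l, h⟩ : Fin a) : ℕ) else f l

/-- The multigraded sign `sign(σ, x)` of a permutation `σ` of `a` symbols with respect to
the multidegrees `x 0, …, x (a-1)`; it is the ordinary sign times the Koszul sign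
collected over the inversions of `σ`. -/
def gsign {G : Type*} (pr : G → G → ℤ) (a : ℕ) (σ : Equiv.Perm (Fin a)) (x : ℕ → G) : ℤ :=
  ((Equiv.Perm.sign σ : ℤˣ) : ℤ) *
    (-1) ^ (∑ p ∈ Finset.univ.filter
        (fun p : Fin a × Fin a => p.1 < p.2 ∧ σ p.2 < σ p.1),
        pr (x ((σ p.1 : Fin a) : ℕ)) (x ((σ p.2 : Fin a) : ℕ))).natAbs

section Ops

variable {G U : Type*} [AddCommGroup G] [AddCommGroup U]

/-- The operation `j(K₁)K₂` of the multigraded Nijenhuis–Richardson calculus.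
`K₁` represents an element of `M^{(k₁,κ₁)}(U)` of arity `a₁ = k₁+1` and `K₂` one of
`M^{(k₂,κ₂)}(U)` of arity `a₂ = k₂+1`; an element of arity `a` is coded as a function
taking the sequence of multidegrees of the (homogeneous) arguments and the sequence of
arguments, and depending only on the first `a` of them. -/
def jop (pr : G → G → ℤ) (a₁ : ℕ) (κ₁ : G) (a₂ : ℕ) (κ₂ : G)
    (K₁ K₂ : (ℕ → G) → (ℕ → U) → U) : (ℕ → G) → (ℕ → U) → U :=
  fun x X => ∑ i ∈ Finset.range a₂,
    sgn (((a₁ : ℤ) - 1) * (i : ℤ) + pr κ₁ (κ₂ + ∑ l ∈ Finset.range i, x l)) •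
      K₂ (insSeq a₁ i ((∑ m ∈ Finset.range a₁, x (m + i)) + κ₁) x)
         (insSeq a₁ i (K₁ (shiftSeq x i) (shiftSeq X i)) X)

/-- The multigraded bracket `[K₁,K₂]^Δ = j(K₁)K₂ - (-1)^{k₁k₂+⟨κ₁,κ₂⟩} j(K₂)K₁`. -/
def brD (pr : G → G → ℤ) (a₁ : ℕ) (κ₁ : G) (a₂ : ℕ) (κ₂ : G)
    (K₁ K₂ : (ℕ → G) → (ℕ → U) → U) : (ℕ → G) → (ℕ → U) → U :=
  fun x X => jop pr a₁ κ₁ a₂ κ₂ K₁ K₂ x X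
    - sgn (((a₁ : ℤ) - 1) * ((a₂ : ℤ) - 1) + pr κ₁ κ₂) • jop pr a₂ κ₂ a₁ κ₁ K₂ K₁ x X

end Ops

/-- `K` represents a (`a`-linear) element of `M(U)`: it does not depend on the degree
sequence, depends only on the first `a` arguments, and is `𝕂`-multilinear in them. -/
def IsML (𝕂 : Type*) [Field 𝕂] {G U U' : Type*} [AddCommGroup U] [Module 𝕂 U]
    [AddCommGroup U'] [Module 𝕂 U'] (a : ℕ) (K : (ℕ → G) → (ℕ → U) → U') : Prop :=
  (∀ x x' X, K x X = K x' X) ∧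
  (∀ x X X', (∀ i, i < a → X i = X' i) → K x X = K x X') ∧
  (∀ x X i, i < a →
    (∀ u v : U, K x (Function.update X i (u + v))
        = K x (Function.update X i u) + K x (Function.update X i v)) ∧
    (∀ (r : 𝕂) (u : U), K x (Function.update X i (r • u)) = r • K x (Function.update X i u)))

/-- `K ∈ M^{(a-1,κ)}(U)`: an `a`-linear map mapping `U^{x₀} × ⋯ × U^{x_{a-1}}` into
`U^{x₀+⋯+x_{a-1}+κ}`. -/
def MDeg (𝕂 : Type*) [Field 𝕂] {G U : Type*} [AddCommGroup G] [AddCommGroup U] [Module 𝕂 U]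
    (gr : G → Submodule 𝕂 U) (a : ℕ) (κ : G) (K : (ℕ → G) → (ℕ → U) → U) : Prop :=
  IsML 𝕂 a K ∧
  ∀ x X, (∀ i, X i ∈ gr (x i)) → K x X ∈ gr ((∑ i ∈ Finset.range a, x i) + κ)

/-- The multigraded alternator `α` on elements of arity `a`. -/
def alt (𝕂 : Type*) [Field 𝕂] {G U U' : Type*} [AddCommGroup U'] [Module 𝕂 U']
    (pr : G → G → ℤ) (a : ℕ) (K : (ℕ → G) → (ℕ → U) → U') : (ℕ → G) → (ℕ → U) → U' :=
  fun x X => (a.factorial : 𝕂)⁻¹ •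
    ∑ σ : Equiv.Perm (Fin a),
      ((gsign pr a σ x : ℤ) : 𝕂) • K (permSeq a σ x) (permSeq a σ X)

/-- The operation `i(K₁)K₂ = ((k₁+k₂+1)!/((k₁+1)!(k₂+1)!)) α(j(K₁)K₂)`. -/
def iop (𝕂 : Type*) [Field 𝕂] {G U : Type*} [AddCommGroup G] [AddCommGroup U] [Module 𝕂 U]
    (pr : G → G → ℤ) (a₁ : ℕ) (κ₁ : G) (a₂ : ℕ) (κ₂ : G)
    (K₁ K₂ : (ℕ → G) → (ℕ → U) → U) : (ℕ → G) → (ℕ → U) → U :=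
  fun x X =>
    (((a₁ + a₂ - 1).factorial : 𝕂) / ((a₁.factorial : 𝕂) * (a₂.factorial : 𝕂))) •
      alt 𝕂 pr (a₁ + a₂ - 1) (jop pr a₁ κ₁ a₂ κ₂ K₁ K₂) x X

/-- The multigraded Nijenhuis–Richardson bracket
`[K₁,K₂]^∧ = i(K₁)K₂ - (-1)^{k₁k₂+⟨κ₁,κ₂⟩} i(K₂)K₁`. -/
def brW (𝕂 : Type*) [Field 𝕂] {G U : Type*} [AddCommGroup G] [AddCommGroup U] [Module 𝕂 U]
    (pr : G → G → ℤ) (a₁ : ℕ) (κ₁ : G) (a₂ : ℕ) (κ₂ : G)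
    (K₁ K₂ : (ℕ → G) → (ℕ → U) → U) : (ℕ → G) → (ℕ → U) → U :=
  fun x X => iop 𝕂 pr a₁ κ₁ a₂ κ₂ K₁ K₂ x X
    - sgn (((a₁ : ℤ) - 1) * ((a₂ : ℤ) - 1) + pr κ₁ κ₂) • iop 𝕂 pr a₂ κ₂ a₁ κ₁ K₂ K₁ x X

/-- `K ∈ A^{(a-1,κ)}(U) = α(M^{(a-1,κ)}(U))`, i.e. `K ∈ M^{(a-1,κ)}(U)` and `K` is fixed by
the multigraded alternator (on homogeneous arguments). -/
def ADeg (𝕂 : Type*) [Field 𝕂] {G U : Type*} [AddCommGroup G] [AddCommGroup U] [Module 𝕂 U]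
    (pr : G → G → ℤ) (gr : G → Submodule 𝕂 U) (a : ℕ) (κ : G)
    (K : (ℕ → G) → (ℕ → U) → U) : Prop :=
  MDeg 𝕂 gr a κ K ∧
  ∀ x X, (∀ i, X i ∈ gr (x i)) → alt 𝕂 pr a K x X = K x X

/-- The bilinear map `P` coded as an element of arity `2`. -/
def KofBil {𝕂 : Type*} [Field 𝕂] {G U : Type*} [AddCommGroup U] [Module 𝕂 U]
    (P : U →ₗ[𝕂] U →ₗ[𝕂] U) : (ℕ → G) → (ℕ → U) → U :=
  fun _ X => P (X 0) (X 1)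

/-!
Expanding `j(K₁) j(K₂) K₃` gives a double sum over the slot where `K₁` is inserted and the
slot of `K₃` where `K₂` is then inserted. The terms in which `K₁` lands inside an argument of
`K₂` are exactly the terms of `j(j(K₁) K₂) K₃`. In the remaining terms `K₁` and `K₂` occupy
disjoint slots of `K₃`, and each of them is, up to the sign `(-1)^{k₁k₂+⟨κ₁,κ₂⟩}`, a term of
`j(K₂) j(K₁) K₃`; so they cancel in the graded commutator, while `j(·) K₃` is linear.
-/

section Sign

theorem sgn_eq_negOnePow (z : ℤ) : sgn z = z.negOnePow :=
  (Int.coe_negOnePow ℤ z).symm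

theorem sgn_add (a b : ℤ) : sgn (a + b) = sgn a * sgn b := by
  rw [sgn_eq_negOnePow, sgn_eq_negOnePow, sgn_eq_negOnePow, Int.negOnePow_add, Units.val_mul]

theorem sgn_congr {a b : ℤ} (h : Even (a - b)) : sgn a = sgn b := by
  rw [sgn_eq_negOnePow, sgn_eq_negOnePow, (Int.negOnePow_eq_iff a b).2 h]

theorem sgn_mul_self (a : ℤ) : sgn a * sgn a = 1 := by
  rw [sgn_eq_negOnePow, ← Units.val_mul, Int.units_mul_self, Units.val_one]

theorem sgn_smul_smul {M : Type*} [AddCommGroup M] (a b : ℤ) (v : M) :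
    sgn a • sgn b • v = sgn (a + b) • v := by
  rw [smul_smul, sgn_add]

end Sign

section Seq

variable {β : Type*} {a b i l p q r : ℕ} {c d : β} {f : ℕ → β}

theorem insSeq_of_lt (h : l < i) : insSeq a i c f l = f l := if_pos h

theorem update_insSeq (d : β) :
    Function.update (insSeq a i c f) i d = insSeq a i d f := by
  funext l
  rcases eq_or_ne l i with rfl | h
  · simp [insSeq]
  · simp [Function.update, h, insSeq]

theorem shiftSeq_shiftSeq (f : ℕ → β) (i j : ℕ) :
    shiftSeq (shiftSeq f i) j = shiftSeq f (i + j) :=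
  funext fun m => congrArg f (by omega)

theorem shiftSeq_insSeq_of_lt (h : p < q) :
    shiftSeq (insSeq a p c f) q = shiftSeq f (q + a - 1) :=
  funext fun m => by
    unfold shiftSeq insSeq
    rw [if_neg (by omega), if_neg (by omega)]
    exact congrArg f (by omega)

theorem shiftSeq_insSeq_add (q r : ℕ) :
    shiftSeq (insSeq a (q + r) c f) q = insSeq a r c (shiftSeq f q) :=
  funext fun m => by
    unfold shiftSeq insSeq
    split_ifs <;> first | rfl | omega | exact congrArg f (by omega)

theorem insSeq_insSeq_add (h : r < b) :
    insSeq b q d (insSeq a (q + r) c f) = insSeq (a + b - 1) q d f :=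
  funext fun m => by
    unfold insSeq
    split_ifs <;> first | rfl | omega | exact congrArg f (by omega)

theorem insSeq_insSeq_of_lt (h : q < p) :
    insSeq b q d (insSeq a (p + b - 1) c f) = insSeq a p c (insSeq b q d f) :=
  funext fun m => by
    unfold insSeq
    split_ifs <;> first | rfl | omega | exact congrArg f (by omega)

end Seq

section DegreeSums

variable {G : Type*} [AddCommGroup G] {a p q : ℕ} (f : ℕ → G)

theorem sum_range_insSeq_of_le (h : q ≤ p) (c : G) :
    ∑ l ∈ range q, insSeq a p c f l = ∑ l ∈ range q, f l :=
  sum_congr rfl fun _ hl => insSeq_of_lt (by rw [mem_range] at hl; omega)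

theorem sum_range_add_eq_add_sum_shiftSeq (q r : ℕ) :
    ∑ l ∈ range (q + r), f l = ∑ l ∈ range q, f l + ∑ l ∈ range r, shiftSeq f q l := by
  rw [sum_range_add]
  exact congrArg _ (sum_congr rfl fun l _ => congrArg f (add_comm q l))

theorem sum_range_insSeq_of_lt (h : p < q) (κ : G) :
    ∑ l ∈ range q, insSeq a p (∑ m ∈ range a, f (m + p) + κ) f l
      = ∑ l ∈ range (q + a - 1), f l + κ := by
  obtain ⟨s, rfl⟩ : ∃ s, q = p + 1 + s := ⟨q - p - 1, by omega⟩
  rw [show p + 1 + s + a - 1 = p + a + s by omega, sum_range_add, sum_range_succ,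
    sum_range_insSeq_of_le f le_rfl, sum_range_add, sum_range_add]
  simp only [insSeq, lt_irrefl, if_false, if_true, show ∀ j, ¬ p + 1 + j < p by omega,
    show ∀ j, p + 1 + j ≠ p by omega, show ∀ j, p + 1 + j + a - 1 = p + a + j by omega,
    add_comm _ p]
  abel

end DegreeSums

theorem sum_eq_add_sum_filter_trichotomy {M : Type*} [AddCommMonoid M] (s : Finset (ℕ × ℕ))
    (a : ℕ) (F : ℕ × ℕ → M) :
    ∑ t ∈ s, F t
      = ∑ t ∈ s.filter (fun t => t.2 ≤ t.1 ∧ t.1 < t.2 + a), F t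
        + ∑ t ∈ s.filter (fun t => t.1 < t.2), F t
        + ∑ t ∈ s.filter (fun t => t.2 + a ≤ t.1), F t := by
  simp only [sum_filter, ← sum_add_distrib]
  refine sum_congr rfl fun t _ => ?_
  split_ifs <;> first | omega | simp

section Slots

variable {U : Type*} {a b i : ℕ} {k : (ℕ → U) → U}

def DependsOnFirst (a : ℕ) (k : (ℕ → U) → U) : Prop :=
  ∀ X X', (∀ i, i < a → X i = X' i) → k X = k X'

theorem DependsOnFirst.apply_shiftSeq_insSeq (hk : DependsOnFirst a k) {p q : ℕ}
    (h : q + a ≤ p) (c : U) (X : ℕ → U) :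
    k (shiftSeq (insSeq b p c X) q) = k (shiftSeq X q) :=
  hk _ _ fun _ _ => insSeq_of_lt (by omega)

variable [AddCommGroup U]

def IsSlotAdditive (a : ℕ) (k : (ℕ → U) → U) : Prop :=
  ∀ X i, i < a → ∀ u v : U,
    k (Function.update X i (u + v)) = k (Function.update X i u) + k (Function.update X i v)

namespace IsSlotAdditive

def insSeqAddHom (hk : IsSlotAdditive a k) (hi : i < a) (b : ℕ) (X : ℕ → U) : U →+ U :=
  AddMonoidHom.mk' (fun v => k (insSeq b i v X)) fun u v => by
    simpa only [update_insSeq] using hk (insSeq b i 0 X) i hi u v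

theorem map_sum_insSeq (hk : IsSlotAdditive a k) (hi : i < a) (X : ℕ → U) {ι : Type*}
    (s : Finset ι) (f : ι → U) :
    k (insSeq b i (∑ j ∈ s, f j) X) = ∑ j ∈ s, k (insSeq b i (f j) X) :=
  map_sum (hk.insSeqAddHom hi b X) f s

theorem map_zsmul_insSeq (hk : IsSlotAdditive a k) (hi : i < a) (X : ℕ → U) (n : ℤ) (v : U) :
    k (insSeq b i (n • v) X) = n • k (insSeq b i v X) :=
  map_zsmul (hk.insSeqAddHom hi b X) n v

theorem map_sub_insSeq (hk : IsSlotAdditive a k) (hi : i < a) (X : ℕ → U) (u v : U) :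
    k (insSeq b i (u - v) X) = k (insSeq b i u X) - k (insSeq b i v X) :=
  map_sub (hk.insSeqAddHom hi b X) u v

end IsSlotAdditive

end Slots

section Composition

variable {G U : Type*} [AddCommGroup G] [AddCommGroup U]

theorem jop_sub_zsmul_left {pr : G → G → ℤ} {b a : ℕ} {κ κ' : G} {k : (ℕ → U) → U}
    (hk : IsSlotAdditive a k) (L₁ L₂ : (ℕ → G) → (ℕ → U) → U) (n : ℤ) (x : ℕ → G)
    (X : ℕ → U) :
    jop pr b κ a κ' (fun x X => L₁ x X - n • L₂ x X) (fun _ => k) x X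
      = jop pr b κ a κ' L₁ (fun _ => k) x X - n • jop pr b κ a κ' L₂ (fun _ => k) x X := by
  simp only [jop, smul_sum, ← sum_sub_distrib]
  refine sum_congr rfl fun i hi => ?_
  rw [hk.map_sub_insSeq (mem_range.1 hi), hk.map_zsmul_insSeq (mem_range.1 hi), smul_sub,
    smul_comm n]

variable (B : G →ₗ[ℤ] G →ₗ[ℤ] ℤ) (a₁ : ℕ) (κ₁ : G) (a₂ : ℕ) (κ₂ : G) (a₃ : ℕ) (κ₃ : G)
  (k₁ k₂ k₃ : (ℕ → U) → U) (x : ℕ → G) (X : ℕ → U)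

/-- The term of `j(K₁) j(K₂) K₃` in which `K₁` is inserted at slot `t.1` and then `K₂` at
slot `t.2`. -/
def jjTerm (t : ℕ × ℕ) : U :=
  sgn (((a₁ : ℤ) - 1) * t.1 + B κ₁ (κ₂ + κ₃ + ∑ l ∈ range t.1, x l)
      + (((a₂ : ℤ) - 1) * t.2
        + B κ₂ (κ₃ + ∑ l ∈ range t.2, insSeq a₁ t.1 (∑ m ∈ range a₁, x (m + t.1) + κ₁) x l))) •
    k₃ (insSeq a₂ t.2 (k₂ (shiftSeq (insSeq a₁ t.1 (k₁ (shiftSeq X t.1)) X) t.2))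
      (insSeq a₁ t.1 (k₁ (shiftSeq X t.1)) X))

/-- The term of `j(j(K₁) K₂) K₃` in which `j(K₁) K₂` is inserted at slot `t.1` of `K₃`, with
`K₁` at slot `t.2` of `K₂`. -/
def nestTerm (t : ℕ × ℕ) : U :=
  sgn ((((a₁ + a₂ - 1 : ℕ) : ℤ) - 1) * t.1 + B (κ₁ + κ₂) (κ₃ + ∑ l ∈ range t.1, x l)
      + (((a₁ : ℤ) - 1) * t.2 + B κ₁ (κ₂ + ∑ l ∈ range t.2, shiftSeq x t.1 l))) •
    k₃ (insSeq (a₁ + a₂ - 1) t.1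
      (k₂ (insSeq a₁ t.2 (k₁ (shiftSeq (shiftSeq X t.1) t.2)) (shiftSeq X t.1))) X)

/-- The terms of `j(K₁) j(K₂) K₃` in which `K₁` lands in a slot of `K₃` left of `K₂`. -/
def jjSumLeft : U :=
  ∑ t ∈ (range (a₂ + a₃ - 1) ×ˢ range a₃).filter (fun t => t.1 < t.2),
    jjTerm B a₁ κ₁ a₂ κ₂ κ₃ k₁ k₂ k₃ x X t

theorem jop_jop_eq_sum_jjTerm :
    jop (fun g h => B g h) a₁ κ₁ (a₂ + a₃ - 1) (κ₂ + κ₃) (fun _ => k₁)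
        (jop (fun g h => B g h) a₂ κ₂ a₃ κ₃ (fun _ => k₂) (fun _ => k₃)) x X
      = ∑ t ∈ range (a₂ + a₃ - 1) ×ˢ range a₃, jjTerm B a₁ κ₁ a₂ κ₂ κ₃ k₁ k₂ k₃ x X t := by
  simp only [jop, jjTerm, smul_sum, sgn_smul_smul, sum_product]

theorem jop_jop_left_eq_sum_nestTerm (hk₃ : IsSlotAdditive a₃ k₃) :
    jop (fun g h => B g h) (a₁ + a₂ - 1) (κ₁ + κ₂) a₃ κ₃
        (jop (fun g h => B g h) a₁ κ₁ a₂ κ₂ (fun _ => k₁) (fun _ => k₂)) (fun _ => k₃) x X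
      = ∑ t ∈ range a₃ ×ˢ range a₂, nestTerm B a₁ κ₁ a₂ κ₂ κ₃ k₁ k₂ k₃ x X t := by
  rw [sum_product]
  refine sum_congr rfl fun q hq => ?_
  simp only [jop, hk₃.map_sum_insSeq (mem_range.1 hq), hk₃.map_zsmul_insSeq (mem_range.1 hq),
    smul_sum, sgn_smul_smul, nestTerm]

end Composition

section Reindex

variable {G U : Type*} [AddCommGroup G] [AddCommGroup U]
  (B : G →ₗ[ℤ] G →ₗ[ℤ] ℤ) {a₁ : ℕ} (κ₁ : G) {a₂ : ℕ} (κ₂ : G) (a₃ : ℕ) (κ₃ : G)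
  (k₁ k₂ k₃ : (ℕ → U) → U) (x : ℕ → G) (X : ℕ → U)

theorem sum_jjTerm_nested :
    ∑ t ∈ (range (a₂ + a₃ - 1) ×ˢ range a₃).filter (fun t => t.2 ≤ t.1 ∧ t.1 < t.2 + a₂),
        jjTerm B a₁ κ₁ a₂ κ₂ κ₃ k₁ k₂ k₃ x X t
      = ∑ t ∈ range a₃ ×ˢ range a₂, nestTerm B a₁ κ₁ a₂ κ₂ κ₃ k₁ k₂ k₃ x X t := by
  symm
  refine sum_nbij' (fun t => (t.1 + t.2, t.1)) (fun t => (t.2, t.1 - t.2)) ?_ ?_ ?_ ?_ ?summand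
  case summand =>
    rintro ⟨q, r⟩ hqr
    rw [mem_product, mem_range, mem_range] at hqr
    unfold jjTerm nestTerm
    dsimp only
    rw [shiftSeq_insSeq_add, shiftSeq_shiftSeq, insSeq_insSeq_add hqr.2,
      sum_range_insSeq_of_le x (Nat.le_add_right q r), sum_range_add_eq_add_sum_shiftSeq x q r]
    congr 2
    simp only [map_add, LinearMap.add_apply]
    rw [show ((a₁ + a₂ - 1 : ℕ) : ℤ) = a₁ + a₂ - 1 by omega]
    push_cast
    ring
  all_goals
    rintro ⟨p, q⟩ h
    simp only [mem_filter, mem_product, mem_range, Prod.mk.injEq, true_and, and_true] at h ⊢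
    omega

theorem sum_jjTerm_right (hB : ∀ g h, B g h = B h g) (hk₂ : DependsOnFirst a₂ k₂) :
    ∑ t ∈ (range (a₂ + a₃ - 1) ×ˢ range a₃).filter (fun t => t.2 + a₂ ≤ t.1),
        jjTerm B a₁ κ₁ a₂ κ₂ κ₃ k₁ k₂ k₃ x X t
      = sgn (((a₁ : ℤ) - 1) * ((a₂ : ℤ) - 1) + B κ₁ κ₂) •
        jjSumLeft B a₂ κ₂ a₁ κ₁ a₃ κ₃ k₂ k₁ k₃ x X := by
  rw [jjSumLeft, smul_sum]
  symm
  refine sum_nbij' (fun t => (t.2 + a₂ - 1, t.1)) (fun t => (t.2, t.1 - a₂ + 1))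
    ?_ ?_ ?_ ?_ ?summand
  case summand =>
    rintro ⟨p, q⟩ hpq
    simp only [mem_filter, mem_product, mem_range] at hpq
    unfold jjTerm
    dsimp only
    rw [sgn_smul_smul, shiftSeq_insSeq_of_lt hpq.2, hk₂.apply_shiftSeq_insSeq (by omega),
      insSeq_insSeq_of_lt hpq.2, sum_range_insSeq_of_lt x hpq.2,
      sum_range_insSeq_of_le x (show p ≤ q + a₂ - 1 by omega)]
    refine congrArg₂ _ (sgn_congr ⟨B κ₁ κ₂, ?_⟩) rfl
    simp only [map_add, hB κ₂ κ₁]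
    rw [show ((q + a₂ - 1 : ℕ) : ℤ) = q + a₂ - 1 by omega]
    ring
  all_goals
    rintro ⟨p, q⟩ h
    simp only [mem_filter, mem_product, mem_range, Prod.mk.injEq, true_and, and_true] at h ⊢
    omega

end Reindex

section Associator

variable {G U : Type*} [AddCommGroup G] [AddCommGroup U]
  (B : G →ₗ[ℤ] G →ₗ[ℤ] ℤ) {a₁ : ℕ} (κ₁ : G) {a₂ : ℕ} (κ₂ : G) {a₃ : ℕ} (κ₃ : G)
  {k₁ k₂ k₃ : (ℕ → U) → U} (x : ℕ → G) (X : ℕ → U)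

/-- The associator `j(K₁) j(K₂) - j(j(K₁) K₂)` only sees insertions of `K₁` and `K₂` into
disjoint slots of `K₃`, hence it is graded symmetric in `K₁, K₂`. -/
theorem jop_jop_eq_add_jjSumLeft (hB : ∀ g h, B g h = B h g) (hk₂ : DependsOnFirst a₂ k₂)
    (hk₃ : IsSlotAdditive a₃ k₃) :
    jop (fun g h => B g h) a₁ κ₁ (a₂ + a₃ - 1) (κ₂ + κ₃) (fun _ => k₁)
        (jop (fun g h => B g h) a₂ κ₂ a₃ κ₃ (fun _ => k₂) (fun _ => k₃)) x X
      = jop (fun g h => B g h) (a₁ + a₂ - 1) (κ₁ + κ₂) a₃ κ₃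
          (jop (fun g h => B g h) a₁ κ₁ a₂ κ₂ (fun _ => k₁) (fun _ => k₂)) (fun _ => k₃) x X
        + jjSumLeft B a₁ κ₁ a₂ κ₂ a₃ κ₃ k₁ k₂ k₃ x X
        + sgn (((a₁ : ℤ) - 1) * ((a₂ : ℤ) - 1) + B κ₁ κ₂) •
          jjSumLeft B a₂ κ₂ a₁ κ₁ a₃ κ₃ k₂ k₁ k₃ x X := by
  rw [jop_jop_eq_sum_jjTerm, sum_eq_add_sum_filter_trichotomy _ a₂, sum_jjTerm_nested,
    sum_jjTerm_right B κ₁ κ₂ a₃ κ₃ k₁ k₂ k₃ x X hB hk₂,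
    jop_jop_left_eq_sum_nestTerm B a₁ κ₁ a₂ κ₂ a₃ κ₃ k₁ k₂ k₃ x X hk₃]
  rfl

theorem jop_brD_eq_sub (hB : ∀ g h, B g h = B h g) (hk₁ : DependsOnFirst a₁ k₁)
    (hk₂ : DependsOnFirst a₂ k₂) (hk₃ : IsSlotAdditive a₃ k₃) :
    jop (fun g h => B g h) (a₁ + a₂ - 1) (κ₁ + κ₂) a₃ κ₃
        (brD (fun g h => B g h) a₁ κ₁ a₂ κ₂ (fun _ => k₁) (fun _ => k₂)) (fun _ => k₃) x X
      = jop (fun g h => B g h) a₁ κ₁ (a₂ + a₃ - 1) (κ₂ + κ₃) (fun _ => k₁)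
          (jop (fun g h => B g h) a₂ κ₂ a₃ κ₃ (fun _ => k₂) (fun _ => k₃)) x X
        - sgn (((a₁ : ℤ) - 1) * ((a₂ : ℤ) - 1) + B κ₁ κ₂) •
          jop (fun g h => B g h) a₂ κ₂ (a₁ + a₃ - 1) (κ₁ + κ₃) (fun _ => k₂)
            (jop (fun g h => B g h) a₁ κ₁ a₃ κ₃ (fun _ => k₁) (fun _ => k₃)) x X := by
  have h₂₁ := jop_jop_eq_add_jjSumLeft B κ₂ κ₁ κ₃ x X (a₁ := a₂) (k₁ := k₂) hB hk₁ hk₃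
  rw [add_comm a₂ a₁, add_comm κ₂ κ₁, mul_comm ((a₂ : ℤ) - 1), hB κ₂ κ₁] at h₂₁
  unfold brD
  rw [jop_sub_zsmul_left hk₃, jop_jop_eq_add_jjSumLeft B κ₁ κ₂ κ₃ x X hB hk₂ hk₃, h₂₁,
    smul_add, smul_add, smul_smul, sgn_mul_self, one_smul]
  abel

end Associator

theorem stmt5_general {𝕂 : Type} [Field 𝕂] (n : ℕ)
    {V : Type} [AddCommGroup V] [Module 𝕂 V]
    (gr : (Fin n → ℤ) → Submodule 𝕂 V)
    (a₁ a₂ a₃ : ℕ) (κ₁ κ₂ κ₃ : Fin n → ℤ)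
    (K₁ K₂ K₃ : (ℕ → (Fin n → ℤ)) → (ℕ → V) → V)
    (h₁ : MDeg 𝕂 gr a₁ κ₁ K₁) (h₂ : MDeg 𝕂 gr a₂ κ₂ K₂) (h₃ : MDeg 𝕂 gr a₃ κ₃ K₃) :
    ∀ x X, (∀ i, X i ∈ gr (x i)) →
      jop (pairZ n) (a₁ + a₂ - 1) (κ₁ + κ₂) a₃ κ₃
          (brD (pairZ n) a₁ κ₁ a₂ κ₂ K₁ K₂) K₃ x X
        = jop (pairZ n) a₁ κ₁ (a₂ + a₃ - 1) (κ₂ + κ₃) K₁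
            (jop (pairZ n) a₂ κ₂ a₃ κ₃ K₂ K₃) x X
          - sgn (((a₁ : ℤ) - 1) * ((a₂ : ℤ) - 1) + pairZ n κ₁ κ₂) •
            jop (pairZ n) a₂ κ₂ (a₁ + a₃ - 1) (κ₁ + κ₃) K₂
              (jop (pairZ n) a₁ κ₁ a₃ κ₃ K₁ K₃) x X := by
  intro x X _
  obtain ⟨k₁, rfl⟩ : ∃ k, K₁ = fun _ => k := ⟨K₁ 0, funext₂ fun x' X' => h₁.1.1 x' 0 X'⟩
  obtain ⟨k₂, rfl⟩ : ∃ k, K₂ = fun _ => k := ⟨K₂ 0, funext₂ fun x' X' => h₂.1.1 x' 0 X'⟩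
  obtain ⟨k₃, rfl⟩ : ∃ k, K₃ = fun _ => k := ⟨K₃ 0, funext₂ fun x' X' => h₃.1.1 x' 0 X'⟩
  exact jop_brD_eq_sub (dotProductBilin ℤ ℤ) κ₁ κ₂ κ₃ x X dotProduct_comm (h₁.1.2.1 0)
    (h₂.1.2.1 0) (fun X i hi => (h₃.1.2.2 0 X i hi).1)

/-- For homogeneous `K₁ ∈ M^{(k₁,κ₁)}(V)` and `K₂ ∈ M^{(k₂,κ₂)}(V)` one
has `j([K₁,K₂]^Δ) = j(K₁)∘j(K₂) − (−1)^{k₁k₂+⟨κ₁,κ₂⟩} j(K₂)∘j(K₁)` as endomorphisms of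
`M(V)`, i.e. both sides agree on every homogeneous `K₃ ∈ M^{(k₃,κ₃)}(V)`, evaluated on
homogeneous arguments.  (Arities: `aᵢ = kᵢ + 1`.) -/
theorem stmt5 {𝕂 : Type} [Field 𝕂] [CharZero 𝕂] (n : ℕ)
    {V : Type} [AddCommGroup V] [Module 𝕂 V]
    (gr : (Fin n → ℤ) → Submodule 𝕂 V) (hgr : DirectSum.IsInternal gr)
    (a₁ a₂ a₃ : ℕ) (κ₁ κ₂ κ₃ : Fin n → ℤ)
    (K₁ K₂ K₃ : (ℕ → (Fin n → ℤ)) → (ℕ → V) → V)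
    (h₁ : MDeg 𝕂 gr a₁ κ₁ K₁) (h₂ : MDeg 𝕂 gr a₂ κ₂ K₂) (h₃ : MDeg 𝕂 gr a₃ κ₃ K₃) :
    ∀ x X, (∀ i, X i ∈ gr (x i)) →
      jop (pairZ n) (a₁ + a₂ - 1) (κ₁ + κ₂) a₃ κ₃
          (brD (pairZ n) a₁ κ₁ a₂ κ₂ K₁ K₂) K₃ x X
        = jop (pairZ n) a₁ κ₁ (a₂ + a₃ - 1) (κ₂ + κ₃) K₁
            (jop (pairZ n) a₂ κ₂ a₃ κ₃ K₂ K₃) x X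
          - sgn (((a₁ : ℤ) - 1) * ((a₂ : ℤ) - 1) + pairZ n κ₁ κ₂) •
            jop (pairZ n) a₂ κ₂ (a₁ + a₃ - 1) (κ₁ + κ₃) K₂
              (jop (pairZ n) a₁ κ₁ a₃ κ₃ K₁ K₃) x X :=
  stmt5_general n gr a₁ a₂ a₃ κ₁ κ₂ κ₃ K₁ K₂ K₃ h₁ h₂ h₃

end NR
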